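/- arXiv:1808.03876 — 2 statements merged into one kernel-verified Lean document; each statement's English description precedes it below -/
import Mathlib

section
/- A Poisson mixture of a normally distributed rate has a log-concave pmf: if M has density proportional to exp(-(m-k₁)²/(2k₂)) restricted to m ≥ 0, and conditionally on M = m, Y ~ Poisson(m), then the marginal pmf p_Y[k] = ∫₀^∞ e^{-m} m^k/k! · f_M(m) dm is a log-concave sequence in k, i.e., p_Y[k]² ≥ p_Y[k-1]·p_Y[k+1] for all k ≥ 1. -/
open MeasureTheory Real Filter Set
open scoped Nat Topology

/-!
Since `e^{-m} e^{-(m-k₁)²/(2k₂)}` is a constant multiple of the Gaussian `e^{-(m-μ)²/(2k₂)}`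
with `μ = k₁ - k₂`, the pmf is `p k = C · M k / k!`, where `M k` is the `k`-th moment of that
Gaussian restricted to `m > 0`. Integration by parts gives the recursion
`M (j+2) = μ M (j+1) + k₂ (j+1) M j`, and Cauchy–Schwarz gives `M (n+1)² ≤ M n M (n+2)`.
Feeding the recursion into Cauchy–Schwarz at `n + 1` yields
`k₂ ((n+2) M (n+1)² - (n+1) M n M (n+2)) ≥ 0`, which is exactly `p n p (n+2) ≤ p (n+1)²`.
-/

theorem sq_integral_mul_le {α : Type*} [MeasurableSpace α] {μ : Measure α} {f g : α → ℝ}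
    (hf : 0 ≤ᵐ[μ] f) (hf_int : Integrable f μ) (hfg : Integrable (fun x ↦ f x * g x) μ)
    (hfg2 : Integrable (fun x ↦ f x * g x ^ 2) μ) :
    (∫ x, f x * g x ∂μ) ^ 2 ≤ (∫ x, f x ∂μ) * ∫ x, f x * g x ^ 2 ∂μ := by
  have hquad (t : ℝ) : 0 ≤ (∫ x, f x * g x ^ 2 ∂μ) * (t * t) + (2 * ∫ x, f x * g x ∂μ) * t
      + ∫ x, f x ∂μ :=
    calc 0 ≤ ∫ x, f x * (t * g x + 1) ^ 2 ∂μ :=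
          integral_nonneg_of_ae (by filter_upwards [hf] with x hx using mul_nonneg hx (sq_nonneg _))
      _ = ∫ x, (t * t) * (f x * g x ^ 2) + (2 * t) * (f x * g x) + f x ∂μ := by
          congr 1; ext x; ring
      _ = _ := by
          rw [integral_add _ hf_int, integral_add, integral_const_mul, integral_const_mul]
          · ring
          all_goals fun_prop
  have := discrim_le_zero hquad
  rw [discrim] at this
  linarith

section TruncatedGaussian

variable {μ v : ℝ}

noncomputable def truncGaussMoment (μ v : ℝ) (n : ℕ) : ℝ :=
  ∫ m in Ioi 0, m ^ n * exp (-(m - μ) ^ 2 / (2 * v))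

lemma pow_mul_exp_neg_sq_le (hv : 0 < v) (n : ℕ) {m : ℝ} (hm : 0 ≤ m) :
    m ^ n * exp (-(m - μ) ^ 2 / (2 * v)) ≤ exp (μ + v / 2) * (m ^ n * exp (-m)) := by
  have hexp : exp (-(m - μ) ^ 2 / (2 * v)) ≤ exp (μ + v / 2) * exp (-m) := by
    rw [← exp_add, exp_le_exp, div_le_iff₀ (by positivity)]
    nlinarith [sq_nonneg (m - μ - v)]
  calc m ^ n * exp (-(m - μ) ^ 2 / (2 * v)) ≤ m ^ n * (exp (μ + v / 2) * exp (-m)) := by gcongr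
    _ = _ := by ring

lemma integrableOn_pow_mul_exp_neg_sq (hv : 0 < v) (n : ℕ) :
    IntegrableOn (fun m ↦ m ^ n * exp (-(m - μ) ^ 2 / (2 * v))) (Ioi 0) := by
  have hgamma : IntegrableOn (fun m : ℝ ↦ m ^ n * exp (-m)) (Ioi 0) := by
    simpa [mul_comm] using GammaIntegral_convergent (s := n + 1) (by positivity)
  refine (hgamma.const_mul (exp (μ + v / 2))).mono' (by fun_prop) ?_
  filter_upwards [ae_restrict_mem measurableSet_Ioi] with m (hm : 0 < m)
  rw [norm_of_nonneg (by positivity)]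
  exact pow_mul_exp_neg_sq_le hv n hm.le

lemma tendsto_pow_mul_exp_neg_sq (hv : 0 < v) (n : ℕ) :
    Tendsto (fun m ↦ m ^ n * exp (-(m - μ) ^ 2 / (2 * v))) atTop (𝓝 0) := by
  refine squeeze_zero' (eventually_ge_atTop 0 |>.mono fun m hm ↦ by positivity)
    (eventually_ge_atTop 0 |>.mono fun m hm ↦ pow_mul_exp_neg_sq_le hv n hm) ?_
  simpa using (tendsto_pow_mul_exp_neg_atTop_nhds_zero n).const_mul (exp (μ + v / 2))

lemma truncGaussMoment_add_two (hv : 0 < v) (j : ℕ) :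
    truncGaussMoment μ v (j + 2) =
      μ * truncGaussMoment μ v (j + 1) + v * (j + 1) * truncGaussMoment μ v j := by
  set g : ℝ → ℝ := fun m ↦ exp (-(m - μ) ^ 2 / (2 * v))
  have hg (m : ℝ) : HasDerivAt g (-(m - μ) / v * g m) m := by
    refine ((((hasDerivAt_id m).sub_const μ).fun_pow 2).fun_neg.div_const (2 * v)).exp
      |>.congr_deriv ?_
    simp only [g, id]
    field_simp
    ring
  have hint (c : ℝ) (n : ℕ) : IntegrableOn (fun m ↦ c * (m ^ n * g m)) (Ioi 0) :=
    (integrableOn_pow_mul_exp_neg_sq hv n).const_mul c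
  -- the integrand is the derivative of `m ^ (j + 1) * g m`, which vanishes at `0` and at `∞`
  have hparts : ∫ m in Ioi 0, ((j + 1) * (m ^ j * g m) - v⁻¹ * (m ^ (j + 2) * g m)
      + μ / v * (m ^ (j + 1) * g m)) = 0 := by
    rw [integral_Ioi_of_hasDerivAt_of_tendsto' (f := fun m ↦ m ^ (j + 1) * g m) (m := 0)]
    · simp
    · intro m _
      refine ((hasDerivAt_pow (j + 1) m).fun_mul (hg m)).congr_deriv ?_
      push_cast
      field_simp
      ring
    · exact ((hint _ j).sub (hint _ _)).add (hint _ _)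
    · exact tendsto_pow_mul_exp_neg_sq hv (j + 1)
  rw [integral_add ((hint _ j).fun_sub (hint _ _)) (hint _ _), integral_sub (hint _ j) (hint _ _),
    integral_const_mul, integral_const_mul, integral_const_mul] at hparts
  simp only [truncGaussMoment]
  field_simp at hparts
  linarith

lemma truncGaussMoment_sq_le (hv : 0 < v) (n : ℕ) :
    truncGaussMoment μ v (n + 1) ^ 2 ≤ truncGaussMoment μ v n * truncGaussMoment μ v (n + 2) := by
  have hint (k : ℕ) := integrableOn_pow_mul_exp_neg_sq (μ := μ) hv k
  unfold truncGaussMoment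
  convert sq_integral_mul_le (μ := volume.restrict (Ioi 0)) (g := fun m ↦ m)
    (ae_restrict_of_forall_mem measurableSet_Ioi fun m (hm : 0 < m) ↦ by positivity) (hint n)
    ((hint (n + 1)).congr_fun (fun m _ ↦ by ring) measurableSet_Ioi)
    ((hint (n + 2)).congr_fun (fun m _ ↦ by ring) measurableSet_Ioi) using 3 <;>
  (funext m; ring)

end TruncatedGaussian

lemma div_factorial_mul_le_sq_of_recursion {M : ℕ → ℝ} {μ v : ℝ} (hv : 0 < v)
    (hrec : ∀ j : ℕ, M (j + 2) = μ * M (j + 1) + v * (j + 1) * M j)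
    (hturan : ∀ n, M (n + 1) ^ 2 ≤ M n * M (n + 2)) (n : ℕ) :
    M n / n ! * (M (n + 2) / (n + 2)!) ≤ (M (n + 1) / (n + 1)!) ^ 2 := by
  have key : (n + 1) * (M n * M (n + 2)) ≤ (n + 2) * M (n + 1) ^ 2 := by
    have hid : M (n + 1) * M (n + 3) - M (n + 2) ^ 2
        = v * ((n + 2) * M (n + 1) ^ 2 - (n + 1) * (M n * M (n + 2))) := by
      rw [hrec (n + 1), hrec n]; push_cast; ring
    nlinarith [hturan (n + 1)]
  rw [Nat.factorial_succ, Nat.factorial_succ]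
  push_cast
  rw [div_mul_div_comm, div_pow, div_le_div_iff₀ (by positivity) (by positivity)]
  have : (0:ℝ) < n ! := by positivity
  nlinarith

lemma exp_neg_mul_exp_neg_sq {k₁ k₂ : ℝ} (hk₂ : 0 < k₂) (m : ℝ) :
    exp (-m) * exp (-(m - k₁) ^ 2 / (2 * k₂))
      = exp (k₂ / 2 - k₁) * exp (-(m - (k₁ - k₂)) ^ 2 / (2 * k₂)) := by
  rw [← exp_add, ← exp_add]
  congr 1
  field_simp
  ring

theorem gaussian_mixed_poisson_log_concave_general (k₁ k₂ : ℝ) (hk₂ : 0 < k₂) (Z : ℝ)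
    (p : ℕ → ℝ)
    (hp : ∀ k, p k = ∫ m in Set.Ioi (0:ℝ),
        Real.exp (-m) * m ^ k / (k.factorial : ℝ)
          * (Real.exp (-(m - k₁) ^ 2 / (2 * k₂)) / Z)) :
    ∀ k : ℕ, 1 ≤ k → p (k - 1) * p (k + 1) ≤ p k ^ 2 := by
  have hpM (k : ℕ) : p k = exp (k₂ / 2 - k₁) / Z * (truncGaussMoment (k₁ - k₂) k₂ k / k !) := by
    rw [hp, truncGaussMoment, ← integral_div, ← integral_const_mul]
    congr 1
    funext m
    linear_combination m ^ k / k ! / Z * exp_neg_mul_exp_neg_sq (k₁ := k₁) hk₂ m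
  intro k hk
  obtain ⟨n, rfl⟩ := Nat.exists_eq_add_of_le' hk
  rw [Nat.add_sub_cancel, hpM, hpM, hpM, mul_pow, mul_mul_mul_comm, ← sq]
  gcongr
  exact div_factorial_mul_le_sq_of_recursion hk₂ (truncGaussMoment_add_two hk₂)
    (truncGaussMoment_sq_le hk₂) n

/-- A Poisson mixture whose rate has a (truncated) normal density has a log-concave pmf. -/
theorem gaussian_mixed_poisson_log_concave (k₁ k₂ : ℝ) (hk₂ : 0 < k₂) (Z : ℝ)
    (hZ : Z = ∫ m in Set.Ioi (0:ℝ), Real.exp (-(m - k₁) ^ 2 / (2 * k₂)))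
    (p : ℕ → ℝ)
    (hp : ∀ k, p k = ∫ m in Set.Ioi (0:ℝ),
        Real.exp (-m) * m ^ k / (k.factorial : ℝ)
          * (Real.exp (-(m - k₁) ^ 2 / (2 * k₂)) / Z)) :
    ∀ k : ℕ, 1 ≤ k → p (k - 1) * p (k + 1) ≤ p k ^ 2 :=
  gaussian_mixed_poisson_log_concave_general k₁ k₂ hk₂ Z p hp
end

section
/- (Lemma 1, converse direction) Suppose P_e(ζ) = ½(1 - F₀(ζ) + F₁(ζ)) is quasiconvex in ζ with global minimum at ζ₀, where F_b is the CDF of the observation given B₀=b. Then the ML rule B̂₀(ζ) = argmax_b p_Y[ζ|B₀=b] coincides with the single-threshold rule: decide 0 for ζ < ζ₀ and decide 1 for ζ > ζ₀. -/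
/-!
The derivative of `P_e` is `(p₁ - p₀) / 2`. At a point `ζ < ζ₀` the function `P_e` is antitone
on the neighbourhood `Iic ζ₀` of `ζ`, so its derivative there is nonpositive, i.e. `p₁ ≤ p₀`;
symmetrically, `P_e` is monotone on the neighbourhood `Ici ζ₀` of any `ζ > ζ₀`, so `p₀ ≤ p₁`.
-/

open Filter Set Topology

theorem accPt_principal_of_mem_nhds {X : Type*} [TopologicalSpace X] {x : X} [(𝓝[≠] x).NeBot]
    {s : Set X} (hs : s ∈ 𝓝 x) : AccPt x (𝓟 s) :=
  accPt_iff_frequently_nhdsNE.mpr (eventually_nhdsWithin_of_eventually_nhds hs).frequently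

section Order

variable {𝕜 : Type*} [NontriviallyNormedField 𝕜] [LinearOrder 𝕜] [IsStrictOrderedRing 𝕜]
  [OrderTopology 𝕜] {f : 𝕜 → 𝕜} {f' x : 𝕜} {s : Set 𝕜}

theorem HasDerivAt.nonneg_of_monotoneOn_of_mem_nhds (hf : HasDerivAt f f' x) (hs : s ∈ 𝓝 x)
    (hmono : MonotoneOn f s) : 0 ≤ f' :=
  hf.hasDerivWithinAt.nonneg_of_monotoneOn (accPt_principal_of_mem_nhds hs) hmono

theorem HasDerivAt.nonpos_of_antitoneOn_of_mem_nhds (hf : HasDerivAt f f' x) (hs : s ∈ 𝓝 x)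
    (hanti : AntitoneOn f s) : f' ≤ 0 :=
  hf.hasDerivWithinAt.nonpos_of_antitoneOn (accPt_principal_of_mem_nhds hs) hanti

end Order

theorem hasDerivAt_errorProbability {F0 F1 : ℝ → ℝ} {p0 p1 x : ℝ}
    (hF0 : HasDerivAt F0 p0 x) (hF1 : HasDerivAt F1 p1 x) :
    HasDerivAt (fun ζ => (1 - F0 ζ + F1 ζ) / 2) ((p1 - p0) / 2) x :=
  (((hF0.const_sub 1).add hF1).div_const 2).congr_deriv (by ring)

theorem quasiconvex_implies_ml_single_threshold_general
    (p0 p1 F0 F1 Pe : ℝ → ℝ) (ζ₀ : ℝ)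
    (hF0 : ∀ ζ, HasDerivAt F0 (p0 ζ) ζ) (hF1 : ∀ ζ, HasDerivAt F1 (p1 ζ) ζ)
    (hPe : ∀ ζ, Pe ζ = (1 - F0 ζ + F1 ζ) / 2)
    (hdec : ∀ a b, a ≤ b → b ≤ ζ₀ → Pe b ≤ Pe a)
    (hinc : ∀ a b, ζ₀ ≤ a → a ≤ b → Pe a ≤ Pe b) :
    (∀ ζ, ζ < ζ₀ → p1 ζ ≤ p0 ζ) ∧ (∀ ζ, ζ₀ < ζ → p0 ζ ≤ p1 ζ) := by
  have hderiv (ζ : ℝ) : HasDerivAt Pe ((p1 ζ - p0 ζ) / 2) ζ := by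
    rw [funext hPe]
    exact hasDerivAt_errorProbability (hF0 ζ) (hF1 ζ)
  have hanti : AntitoneOn Pe (Iic ζ₀) := fun a _ b hb hab => hdec a b hab hb
  have hmono : MonotoneOn Pe (Ici ζ₀) := fun a ha b _ hab => hinc a b ha hab
  refine ⟨fun ζ hζ => ?_, fun ζ hζ => ?_⟩
  · have := (hderiv ζ).nonpos_of_antitoneOn_of_mem_nhds (Iic_mem_nhds hζ) hanti
    linarith
  · have := (hderiv ζ).nonneg_of_monotoneOn_of_mem_nhds (Ici_mem_nhds hζ) hmono
    linarith

/-- Lemma 1, converse direction: if the error probability P_e(ζ) = ½(1 - F₀(ζ) + F₁(ζ)) is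
quasiconvex with global minimum at ζ₀, then the ML rule coincides with the single-threshold
rule with threshold ζ₀. -/
theorem quasiconvex_implies_ml_single_threshold
    (p0 p1 F0 F1 Pe : ℝ → ℝ) (ζ₀ : ℝ)
    (hF0 : ∀ ζ, HasDerivAt F0 (p0 ζ) ζ) (hF1 : ∀ ζ, HasDerivAt F1 (p1 ζ) ζ)
    (hPe : ∀ ζ, Pe ζ = (1 - F0 ζ + F1 ζ) / 2)
    (hdec : ∀ a b, a ≤ b → b ≤ ζ₀ → Pe b ≤ Pe a)
    (hinc : ∀ a b, ζ₀ ≤ a → a ≤ b → Pe a ≤ Pe b)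
    (hmin : ∀ ζ, Pe ζ₀ ≤ Pe ζ) :
    (∀ ζ, ζ < ζ₀ → p1 ζ ≤ p0 ζ) ∧ (∀ ζ, ζ₀ < ζ → p0 ζ ≤ p1 ζ) :=
  quasiconvex_implies_ml_single_threshold_general p0 p1 F0 F1 Pe ζ₀ hF0 hF1 hPe hdec hinc
end
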